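/- For every solution of the delayed Hegselmann–Krause system and almost every t > 2τ, the diameter d_x is differentiable at t and satisfies (d/dt) d_x(t) ≤ 4∫_{t−τ}^{t} d_x(s−τ) ds + 4τ∫_{t−2τ}^{t} max_{l} |ẋ_l(r)| dr − N·a̲(t)·d_x(t). -/

import Mathlib

/-!
The diameter is locally Lipschitz on `(0, ∞)`, since the velocities are continuous there, so by
Rademacher it is differentiable almost everywhere. At such a time `t`, take agents `i, j` realising
the diameter and a norm-one functional `g` with `g (x_i - x_j) = d_x(t)`; then
`d_x'(t) = g (ẋ_i(t) - ẋ_j(t))`. Replacing the delayed positions in the equation by current ones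
costs at most the displacement `R = ∫_{t-τ}^t max_l |ẋ_l|` per agent, and with current positions
each of `i, j` is pulled towards every agent with weight at least `a̲(t)`, giving
`d_x'(t) ≤ 4R - N a̲(t) d_x(t)`. Finally `|ẋ_l(r)| ≤ d_x(r - τ) + ∫_{t-2τ}^t max_l |ẋ_l|` for
`r ∈ [t - τ, t]`, which bounds `R`.
-/

open scoped BigOperators
open MeasureTheory

/-- Diameter of the agent configuration at time `t`. -/
noncomputable def hkDiam {N d : ℕ} (x : Fin N → ℝ → EuclideanSpace ℝ (Fin d)) (t : ℝ) : ℝ :=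
  ⨆ i : Fin N, ⨆ j : Fin N, ‖x i t - x j t‖

/-- Maximum of the norms of the derivatives at time `t`. -/
noncomputable def hkMaxDer {N d : ℕ} (x' : Fin N → ℝ → EuclideanSpace ℝ (Fin d)) (t : ℝ) : ℝ :=
  ⨆ i : Fin N, ‖x' i t‖

/-- Minimal communication rate `a̲(t) = min_{i ≠ j} ψ(|x_i(t-σ) - x_j(t-τ)|)/(N-1)`. -/
noncomputable def hkAMin {N d : ℕ} (ψ : ℝ → ℝ) (σ τ : ℝ)
    (x : Fin N → ℝ → EuclideanSpace ℝ (Fin d)) (t : ℝ) : ℝ :=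
  ⨅ p : {p : Fin N × Fin N // p.1 ≠ p.2},
    ψ ‖x p.val.1 (t - σ) - x p.val.2 (t - τ)‖ / (N - 1)

open Set

section General

variable {ι E : Type*} [NormedAddCommGroup E] [NormedSpace ℝ E]

theorem HasDerivAt.eq_of_le_of_eq {f g : ℝ → ℝ} {f' g' t : ℝ} (hf : HasDerivAt f f' t)
    (hg : HasDerivAt g g' t) (hle : ∀ s, f s ≤ g s) (heq : f t = g t) : f' = g' := by
  have hmin : IsLocalMin (fun s => g s - f s) t :=
    Filter.Eventually.of_forall fun s => by simp only [heq, sub_self]; linarith [hle s]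
  linarith [hmin.hasDerivAt_eq_zero (hg.sub hf)]

theorem StrongDual.apply_le_norm {g : StrongDual ℝ E} (hg : ‖g‖ ≤ 1) (v : E) : g v ≤ ‖v‖ :=
  (le_abs_self _).trans ((g.le_of_opNorm_le hg v).trans_eq (one_mul _))

theorem norm_sum_smul_le {s : Finset ι} {a : ι → ℝ} {w : ι → E} {B : ℝ}
    (ha : ∀ k ∈ s, 0 ≤ a k) (hsum : ∑ k ∈ s, a k ≤ 1) (hw : ∀ k ∈ s, ‖w k‖ ≤ B) (hB : 0 ≤ B) :
    ‖∑ k ∈ s, a k • w k‖ ≤ B :=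
  calc ‖∑ k ∈ s, a k • w k‖ ≤ ∑ k ∈ s, a k * B := by
        refine (norm_sum_le _ _).trans (Finset.sum_le_sum fun k hk => ?_)
        rw [norm_smul, Real.norm_of_nonneg (ha k hk)]
        exact mul_le_mul_of_nonneg_left (hw k hk) (ha k hk)
    _ = (∑ k ∈ s, a k) * B := (Finset.sum_mul _ _ _).symm
    _ ≤ B := mul_le_of_le_one_left hB hsum

theorem StrongDual.apply_sum_smul_le {g : StrongDual ℝ E} (hg : ‖g‖ ≤ 1) {s : Finset ι}
    {a : ι → ℝ} {w y : ι → E} {m ε : ℝ} (hm : 0 ≤ m) (ha : ∀ k ∈ s, m ≤ a k)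
    (hsum : ∑ k ∈ s, a k ≤ 1) (hy : ∀ k ∈ s, g (y k) ≤ 0) (hw : ∀ k ∈ s, ‖w k - y k‖ ≤ ε)
    (hε : 0 ≤ ε) :
    g (∑ k ∈ s, a k • w k) ≤ m * ∑ k ∈ s, g (y k) + ε := by
  have hterm : ∀ k ∈ s, a k * g (w k) ≤ m * g (y k) + a k * ε := fun k hk => by
    have hwy : g (w k - y k) ≤ ε := (apply_le_norm hg _).trans (hw k hk)
    rw [map_sub] at hwy
    nlinarith [ha k hk, hy k hk]
  calc g (∑ k ∈ s, a k • w k) = ∑ k ∈ s, a k * g (w k) := by simp [map_sum]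
    _ ≤ ∑ k ∈ s, (m * g (y k) + a k * ε) := Finset.sum_le_sum hterm
    _ = m * ∑ k ∈ s, g (y k) + (∑ k ∈ s, a k) * ε := by
        rw [Finset.sum_add_distrib, Finset.mul_sum, Finset.sum_mul]
    _ ≤ m * ∑ k ∈ s, g (y k) + ε := by gcongr; exact mul_le_of_le_one_left hε hsum

theorem ae_differentiableAt_of_lipschitzOnWith_Icc {f : ℝ → ℝ} {a : ℝ}
    (hf : ∀ b c, a < b → ∃ K, LipschitzOnWith K f (Icc b c)) :
    ∀ᵐ t, a < t → DifferentiableAt ℝ f t := by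
  have hloc : ∀ q r : ℚ, ∀ᵐ t, a < q → t ∈ Ioo (q : ℝ) r → DifferentiableAt ℝ f t := by
    intro q r
    by_cases hq : a < q
    · obtain ⟨K, hK⟩ := hf q r hq
      filter_upwards [hK.ae_differentiableWithinAt_of_mem] with t ht _ hqr
      exact (ht (Ioo_subset_Icc_self hqr)).differentiableAt (Icc_mem_nhds hqr.1 hqr.2)
    · exact ae_of_all _ fun t h => absurd h hq
  filter_upwards [ae_all_iff.2 fun q => ae_all_iff.2 (hloc q)] with t h hat
  obtain ⟨q, haq, hqt⟩ := exists_rat_btwn hat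
  obtain ⟨r, htr⟩ := exists_rat_gt t
  exact h q r haq ⟨hqt, htr⟩

end General

section Diameter

variable {N d : ℕ} {x x' : Fin N → ℝ → EuclideanSpace ℝ (Fin d)}

theorem norm_sub_le_hkDiam (x : Fin N → ℝ → EuclideanSpace ℝ (Fin d)) (i j : Fin N) (t : ℝ) :
    ‖x i t - x j t‖ ≤ hkDiam x t :=
  (le_ciSup (Finite.bddAbove_range _) j).trans (le_ciSup (Finite.bddAbove_range
    (fun i => ⨆ j, ‖x i t - x j t‖)) i)

theorem hkDiam_nonneg (x : Fin N → ℝ → EuclideanSpace ℝ (Fin d)) (t : ℝ) : 0 ≤ hkDiam x t :=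
  Real.iSup_nonneg fun _ => Real.iSup_nonneg fun _ => norm_nonneg _

theorem exists_hkDiam_eq [NeZero N] (x : Fin N → ℝ → EuclideanSpace ℝ (Fin d)) (t : ℝ) :
    ∃ i j, hkDiam x t = ‖x i t - x j t‖ := by
  obtain ⟨i, hi⟩ := exists_eq_ciSup_of_finite (f := fun i => ⨆ j, ‖x i t - x j t‖)
  obtain ⟨j, hj⟩ := exists_eq_ciSup_of_finite (f := fun j => ‖x i t - x j t‖)
  exact ⟨i, j, by rw [hkDiam, ← hi, ← hj]⟩

theorem hkDiam_le_add [NeZero N] {r s B : ℝ} (hB : ∀ l, ‖x l s - x l r‖ ≤ B) :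
    hkDiam x s ≤ hkDiam x r + 2 * B := by
  refine ciSup_le fun i => ciSup_le fun j => ?_
  calc ‖x i s - x j s‖ = ‖(x i r - x j r) + ((x i s - x i r) - (x j s - x j r))‖ := by
        congr 1; abel
    _ ≤ hkDiam x r + (B + B) :=
        norm_add_le_of_le (norm_sub_le_hkDiam x i j r) (norm_sub_le_of_le (hB i) (hB j))
    _ = hkDiam x r + 2 * B := by ring

theorem lipschitzOnWith_hkDiam [NeZero N] {K : NNReal} {S : Set ℝ}
    (hx : ∀ i, LipschitzOnWith K (x i) S) : LipschitzOnWith (2 * K) (hkDiam x) S :=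
  LipschitzOnWith.of_le_add_mul _ fun s hs r hr => by
    have := hkDiam_le_add (x := x) fun l => by
      rw [← dist_eq_norm]; exact (hx l).dist_le_mul s hs r hr
    push_cast; linarith

theorem norm_le_hkMaxDer (x' : Fin N → ℝ → EuclideanSpace ℝ (Fin d)) (i : Fin N) (t : ℝ) :
    ‖x' i t‖ ≤ hkMaxDer x' t :=
  le_ciSup (f := fun i => ‖x' i t‖) (Finite.bddAbove_range _) i

theorem hkMaxDer_nonneg (x' : Fin N → ℝ → EuclideanSpace ℝ (Fin d)) (t : ℝ) :
    0 ≤ hkMaxDer x' t :=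
  Real.iSup_nonneg fun _ => norm_nonneg _

theorem continuousOn_hkMaxDer [NeZero N] {S : Set ℝ} (hx' : ∀ i, ContinuousOn (x' i) S) :
    ContinuousOn (hkMaxDer x') S := by
  have : hkMaxDer x' = fun t => Finset.univ.sup' Finset.univ_nonempty fun i => ‖x' i t‖ := by
    funext t; exact (Finset.sup'_univ_eq_ciSup _).symm
  rw [this]
  exact ContinuousOn.finset_sup'_apply _ fun i _ => (hx' i).norm

/-- `s ↦ g (x i s - x j s)` lies below the diameter and touches it at `t`, so both have the
same derivative there. -/
theorem exists_dual_of_hasDerivAt_hkDiam [NeZero N] {t D : ℝ}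
    (hD : HasDerivAt (hkDiam x) D t) (hx : ∀ i, HasDerivAt (x i) (x' i t) t) :
    ∃ i j, ∃ g : StrongDual ℝ (EuclideanSpace ℝ (Fin d)), ‖g‖ ≤ 1 ∧
      g (x i t - x j t) = hkDiam x t ∧ D = g (x' i t) - g (x' j t) := by
  obtain ⟨i, j, hij⟩ := exists_hkDiam_eq x t
  obtain ⟨g, hg, hgx⟩ := exists_dual_vector'' ℝ (x i t - x j t)
  have hgt : g (x i t - x j t) = hkDiam x t := hgx.trans hij.symm
  refine ⟨i, j, g, hg, hgt, ?_⟩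
  have hf : HasDerivAt (fun s => g (x i s - x j s)) (g (x' i t - x' j t)) t :=
    g.hasFDerivAt.comp_hasDerivAt t ((hx i).sub (hx j))
  rw [← map_sub]
  exact (hf.eq_of_le_of_eq hD (fun s => (StrongDual.apply_le_norm hg _).trans
    (norm_sub_le_hkDiam x i j s)) hgt).symm

end Diameter

section Coefficients

variable {N d : ℕ} {σ τ : ℝ} {ψ : ℝ → ℝ} {x : Fin N → ℝ → EuclideanSpace ℝ (Fin d)}

/-- The communication rate `a_ij(t)`. -/
noncomputable def hkCoeff (ψ : ℝ → ℝ) (σ τ : ℝ) (x : Fin N → ℝ → EuclideanSpace ℝ (Fin d))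
    (i j : Fin N) (t : ℝ) : ℝ :=
  ψ ‖x i (t - σ) - x j (t - τ)‖ / (N - 1)

theorem hkCoeff_nonneg [NeZero N] (hψpos : ∀ s, 0 ≤ s → 0 < ψ s) (i j : Fin N) (t : ℝ) :
    0 ≤ hkCoeff ψ σ τ x i j t := by
  have : (1 : ℝ) ≤ N := by exact_mod_cast Nat.one_le_iff_ne_zero.2 (NeZero.ne N)
  exact div_nonneg (hψpos _ (norm_nonneg _)).le (by linarith)

theorem sum_hkCoeff_le_one [NeZero N] (hψbdd : ∀ s, 0 ≤ s → ψ s ≤ 1) (i : Fin N) (t : ℝ) :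
    ∑ j ∈ Finset.univ.erase i, hkCoeff ψ σ τ x i j t ≤ 1 := by
  have hN : (1 : ℝ) ≤ N := by exact_mod_cast Nat.one_le_iff_ne_zero.2 (NeZero.ne N)
  calc ∑ j ∈ Finset.univ.erase i, hkCoeff ψ σ τ x i j t
      ≤ ∑ _j ∈ Finset.univ.erase i, 1 / ((N : ℝ) - 1) :=
        Finset.sum_le_sum fun j _ => div_le_div_of_nonneg_right (hψbdd _ (norm_nonneg _))
          (by linarith)
    _ = ((N : ℝ) - 1) / ((N : ℝ) - 1) := by
        rw [Finset.sum_const, Finset.card_erase_of_mem (Finset.mem_univ i), Finset.card_univ,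
          Fintype.card_fin, nsmul_eq_mul, Nat.cast_pred (NeZero.pos N), mul_one_div]
    _ ≤ 1 := div_self_le_one _

theorem hkAMin_nonneg [NeZero N] (hψpos : ∀ s, 0 ≤ s → 0 < ψ s) (t : ℝ) :
    0 ≤ hkAMin ψ σ τ x t :=
  Real.iInf_nonneg fun p => hkCoeff_nonneg (x := x) hψpos p.1.1 p.1.2 t

theorem hkAMin_le_hkCoeff {i j : Fin N} (hij : i ≠ j) (t : ℝ) :
    hkAMin ψ σ τ x t ≤ hkCoeff ψ σ τ x i j t :=
  ciInf_le (f := fun p : {p : Fin N × Fin N // p.1 ≠ p.2} => hkCoeff ψ σ τ x p.1.1 p.1.2 t)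
    (Finite.bddBelow_range _) ⟨(i, j), hij⟩

end Coefficients

structure IsHKSolution {N d : ℕ} (σ τ : ℝ) (ψ : ℝ → ℝ)
    (x x' : Fin N → ℝ → EuclideanSpace ℝ (Fin d)) : Prop where
  continuousOn : ∀ i, ContinuousOn (x i) (Ici (-τ))
  hasDerivAt : ∀ i, ∀ t > (0 : ℝ), HasDerivAt (x i) (x' i t) t
  deriv_eq : ∀ i, ∀ t > (0 : ℝ),
    x' i t = ∑ j ∈ Finset.univ.erase i, hkCoeff ψ σ τ x i j t • (x j (t - τ) - x i (t - σ))

namespace IsHKSolution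

variable {N d : ℕ} {σ τ : ℝ} {ψ : ℝ → ℝ} {x x' : Fin N → ℝ → EuclideanSpace ℝ (Fin d)}
  (hx : IsHKSolution σ τ ψ x x')
include hx

theorem continuousOn_deriv (hστ : σ ≤ τ) (hψcont : ContinuousOn ψ (Ici 0)) (i : Fin N) :
    ContinuousOn (x' i) (Ioi 0) := by
  have hdelay : ∀ k, ∀ c ≤ τ, ContinuousOn (fun t => x k (t - c)) (Ioi 0) := fun k c hc =>
    (hx.continuousOn k).comp (continuousOn_id.sub continuousOn_const) fun t (ht : 0 < t) => by
      simp only [mem_Ici]; linarith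
  refine ContinuousOn.congr (continuousOn_finsetSum _ fun k _ => ?_) fun t ht => hx.deriv_eq i t ht
  exact ((hψcont.comp ((hdelay i σ hστ).sub (hdelay k τ le_rfl)).norm
    fun _ _ => norm_nonneg _).div_const _).smul ((hdelay k τ le_rfl).sub (hdelay i σ hστ))

theorem continuousOn_hkMaxDer [NeZero N] (hστ : σ ≤ τ) (hψcont : ContinuousOn ψ (Ici 0)) :
    ContinuousOn (hkMaxDer x') (Ioi 0) :=
  _root_.continuousOn_hkMaxDer (hx.continuousOn_deriv hστ hψcont)

theorem norm_sub_le_integral_hkMaxDer [NeZero N] (hστ : σ ≤ τ)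
    (hψcont : ContinuousOn ψ (Ici 0)) (l : Fin N) {a b c e : ℝ} (hc : 0 < c) (hca : c ≤ a)
    (hab : a ≤ b) (hbe : b ≤ e) :
    ‖x l b - x l a‖ ≤ ∫ r in c..e, hkMaxDer x' r := by
  have hint : IntervalIntegrable (hkMaxDer x') volume c e :=
    ((hx.continuousOn_hkMaxDer hστ hψcont).mono fun r hr => hc.trans_le
      (by rw [uIcc_of_le (hca.trans (hab.trans hbe))] at hr; exact hr.1)).intervalIntegrable
  have hderiv : ∀ r ∈ Icc a b, HasDerivAt (x l) (x' l r) r := fun r hr =>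
    hx.hasDerivAt l r (hc.trans_le (hca.trans hr.1))
  calc ‖x l b - x l a‖ ≤ ∫ r in a..b, hkMaxDer x' r :=
        norm_sub_le_integral_of_norm_deriv_le_of_le hab
          (fun r hr => (hderiv r hr).continuousAt.continuousWithinAt)
          (fun r hr => (hderiv r (Ioo_subset_Icc_self hr)).differentiableAt.differentiableWithinAt)
          (ae_of_all _ fun r hr => by
            rw [(hderiv r (Ioo_subset_Icc_self hr)).deriv]; exact norm_le_hkMaxDer x' l r)
          (hint.mono_set (by
            rw [uIcc_of_le hab, uIcc_of_le (hca.trans (hab.trans hbe))]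
            exact Icc_subset_Icc hca hbe))
    _ ≤ ∫ r in c..e, hkMaxDer x' r :=
        intervalIntegral.integral_mono_interval hca hab hbe
          (ae_of_all _ fun r => hkMaxDer_nonneg x' r) hint

theorem exists_lipschitzOnWith_hkDiam [NeZero N] (hστ : σ ≤ τ)
    (hψcont : ContinuousOn ψ (Ici 0)) {b c : ℝ} (hb : 0 < b) :
    ∃ K, LipschitzOnWith K (hkDiam x) (Icc b c) := by
  have hsub : Icc b c ⊆ Ioi 0 := fun r hr => hb.trans_le hr.1
  obtain ⟨C, hC⟩ := isCompact_Icc.exists_bound_of_continuousOn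
    ((hx.continuousOn_hkMaxDer hστ hψcont).mono hsub)
  refine ⟨2 * C.toNNReal, lipschitzOnWith_hkDiam fun i =>
    (convex_Icc b c).lipschitzOnWith_of_nnnorm_hasDerivWithin_le
      (fun r hr => (hx.hasDerivAt i r (hsub hr)).hasDerivWithinAt) fun r hr => ?_⟩
  rw [← NNReal.coe_le_coe, coe_nnnorm, Real.coe_toNNReal']
  exact le_max_of_le_left ((norm_le_hkMaxDer x' i r).trans ((le_abs_self _).trans (hC r hr)))

theorem ae_differentiableAt_hkDiam [NeZero N] (hστ : σ ≤ τ) (hψcont : ContinuousOn ψ (Ici 0)) :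
    ∀ᵐ t, 0 < t → DifferentiableAt ℝ (hkDiam x) t :=
  ae_differentiableAt_of_lipschitzOnWith_Icc fun _ _ hb =>
    hx.exists_lipschitzOnWith_hkDiam hστ hψcont hb

theorem hkMaxDer_le [NeZero N] (hψpos : ∀ s, 0 ≤ s → 0 < ψ s) (hψbdd : ∀ s, 0 ≤ s → ψ s ≤ 1)
    {r B : ℝ} (hr : 0 < r) (hB : ∀ l, ‖x l (r - τ) - x l (r - σ)‖ ≤ B) :
    hkMaxDer x' r ≤ hkDiam x (r - τ) + B := by
  refine ciSup_le fun l => ?_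
  rw [hx.deriv_eq l r hr]
  refine norm_sum_smul_le (fun k _ => hkCoeff_nonneg hψpos l k r) (sum_hkCoeff_le_one hψbdd l r)
    (fun k _ => ?_) (add_nonneg (hkDiam_nonneg x _) ((norm_nonneg _).trans (hB 0)))
  calc ‖x k (r - τ) - x l (r - σ)‖
      = ‖(x k (r - τ) - x l (r - τ)) + (x l (r - τ) - x l (r - σ))‖ := by congr 1; abel
    _ ≤ hkDiam x (r - τ) + B := norm_add_le_of_le (norm_sub_le_hkDiam x k l _) (hB l)

theorem integral_hkMaxDer_le [NeZero N] (hσ : 0 ≤ σ) (hστ : σ ≤ τ)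
    (hψpos : ∀ s, 0 ≤ s → 0 < ψ s) (hψcont : ContinuousOn ψ (Ici 0))
    (hψbdd : ∀ s, 0 ≤ s → ψ s ≤ 1) {t : ℝ} (ht : 2 * τ < t) :
    ∫ r in (t - τ)..t, hkMaxDer x' r ≤
      (∫ s in (t - τ)..t, hkDiam x (s - τ)) + τ * ∫ r in (t - 2 * τ)..t, hkMaxDer x' r := by
  have hτ : 0 ≤ τ := hσ.trans hστ
  set Q := ∫ r in (t - 2 * τ)..t, hkMaxDer x' r
  have hbound : ∀ r ∈ Icc (t - τ) t, hkMaxDer x' r ≤ hkDiam x (r - τ) + Q := fun r hr =>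
    hx.hkMaxDer_le hψpos hψbdd (by linarith [hr.1]) fun l => by
      rw [norm_sub_rev]
      exact hx.norm_sub_le_integral_hkMaxDer hστ hψcont l (by linarith) (by linarith [hr.1])
        (by linarith) (by linarith [hr.2])
  have hmaxder_int : IntervalIntegrable (hkMaxDer x') volume (t - τ) t :=
    ((hx.continuousOn_hkMaxDer hστ hψcont).mono fun r hr => by
      rw [uIcc_of_le (by linarith)] at hr
      exact lt_of_lt_of_le (by linarith) hr.1).intervalIntegrable
  have hdiam_int : IntervalIntegrable (fun s => hkDiam x (s - τ)) volume (t - τ) t := by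
    obtain ⟨K, hK⟩ := hx.exists_lipschitzOnWith_hkDiam hστ hψcont (b := t - 2 * τ) (c := t - τ)
      (by linarith)
    have := (hK.continuousOn.intervalIntegrable_of_Icc (by linarith)).comp_sub_right τ
    rwa [show t - 2 * τ + τ = t - τ by ring, sub_add_cancel] at this
  calc ∫ r in (t - τ)..t, hkMaxDer x' r ≤ ∫ s in (t - τ)..t, (hkDiam x (s - τ) + Q) :=
        intervalIntegral.integral_mono_on (by linarith) hmaxder_int
          (hdiam_int.add intervalIntegrable_const) hbound
    _ = (∫ s in (t - τ)..t, hkDiam x (s - τ)) + τ * Q := by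
        rw [intervalIntegral.integral_add hdiam_int intervalIntegrable_const,
          intervalIntegral.integral_const, smul_eq_mul, sub_sub_cancel]

theorem apply_deriv_le [NeZero N] (hσ : 0 ≤ σ) (hστ : σ ≤ τ)
    (hψpos : ∀ s, 0 ≤ s → 0 < ψ s) (hψbdd : ∀ s, 0 ≤ s → ψ s ≤ 1) {t R : ℝ} (ht : 0 < t)
    (hR : ∀ k, ∀ s ∈ Icc (t - τ) t, ‖x k t - x k s‖ ≤ R)
    {g : StrongDual ℝ (EuclideanSpace ℝ (Fin d))} (hg : ‖g‖ ≤ 1) {l : Fin N}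
    (hl : ∀ k, g (x k t - x l t) ≤ 0) :
    g (x' l t) ≤ hkAMin ψ σ τ x t * ∑ k, g (x k t - x l t) + 2 * R := by
  have hτ : 0 ≤ τ := hσ.trans hστ
  have hR0 : 0 ≤ R := (norm_nonneg _).trans (hR l t ⟨by linarith, le_rfl⟩)
  have hwin : ∀ k, ‖(x k (t - τ) - x l (t - σ)) - (x k t - x l t)‖ ≤ 2 * R := fun k =>
    calc ‖(x k (t - τ) - x l (t - σ)) - (x k t - x l t)‖
        = ‖(x l t - x l (t - σ)) - (x k t - x k (t - τ))‖ := by congr 1; abel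
      _ ≤ R + R := norm_sub_le_of_le (hR l _ ⟨by linarith, by linarith⟩)
          (hR k _ ⟨le_rfl, by linarith⟩)
      _ = 2 * R := by ring
  rw [hx.deriv_eq l t ht, ← Finset.sum_erase_add _ _ (Finset.mem_univ l), sub_self, map_zero,
    add_zero]
  exact StrongDual.apply_sum_smul_le hg (hkAMin_nonneg hψpos t)
    (fun k hk => hkAMin_le_hkCoeff (Finset.ne_of_mem_erase hk).symm t)
    (sum_hkCoeff_le_one hψbdd l t) (fun k _ => hl k) (fun k _ => hwin k) (by linarith)

theorem hasDerivAt_hkDiam_le [NeZero N] (hσ : 0 ≤ σ) (hστ : σ ≤ τ)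
    (hψpos : ∀ s, 0 ≤ s → 0 < ψ s) (hψbdd : ∀ s, 0 ≤ s → ψ s ≤ 1) {t D R : ℝ} (ht : 0 < t)
    (hD : HasDerivAt (hkDiam x) D t) (hR : ∀ k, ∀ s ∈ Icc (t - τ) t, ‖x k t - x k s‖ ≤ R) :
    D ≤ 4 * R - N * hkAMin ψ σ τ x t * hkDiam x t := by
  obtain ⟨i, j, g, hg, hgM, rfl⟩ :=
    exists_dual_of_hasDerivAt_hkDiam hD fun k => hx.hasDerivAt k t ht
  rw [map_sub] at hgM
  have hgle : ∀ k l, g (x k t) - g (x l t) ≤ hkDiam x t := fun k l => by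
    rw [← map_sub]
    exact (StrongDual.apply_le_norm hg _).trans (norm_sub_le_hkDiam x k l t)
  have hvi := hx.apply_deriv_le hσ hστ hψpos hψbdd ht hR hg (l := i) fun k => by
    rw [map_sub]; linarith [hgle k j]
  have hvj := hx.apply_deriv_le hσ hστ hψpos hψbdd ht hR (g := -g) (by rwa [norm_neg]) (l := j)
    fun k => by rw [neg_apply, map_sub]; linarith [hgle i k]
  have hsum : ∑ k, g (x k t - x i t) + ∑ k, (-g) (x k t - x j t) = -(N * hkDiam x t) := by
    have hterm : ∀ k, g (x k t - x i t) + (-g) (x k t - x j t) = -hkDiam x t := fun k => by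
      rw [neg_apply, map_sub, map_sub]
      linarith
    rw [← Finset.sum_add_distrib, Finset.sum_congr rfl fun k _ => hterm k]
    simp
  rw [neg_apply] at hvj
  calc g (x' i t) - g (x' j t)
      ≤ hkAMin ψ σ τ x t * (∑ k, g (x k t - x i t) + ∑ k, (-g) (x k t - x j t)) + 4 * R := by
        linarith
    _ = 4 * R - N * hkAMin ψ σ τ x t * hkDiam x t := by rw [hsum]; ring

end IsHKSolution

theorem stmt_4_general
    (N d : ℕ) (hN : 2 ≤ N)
    (σ τ : ℝ) (hσ : 0 ≤ σ) (hστ : σ ≤ τ)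
    (ψ : ℝ → ℝ)
    (hψpos : ∀ s, 0 ≤ s → 0 < ψ s)
    (hψcont : ContinuousOn ψ (Set.Ici 0))
    (hψbdd : ∀ s, 0 ≤ s → ψ s ≤ 1)
    (x x' : Fin N → ℝ → EuclideanSpace ℝ (Fin d))
    (hxc : ∀ i, ContinuousOn (x i) (Set.Ici (-τ)))
    (hder : ∀ i, ∀ t > (0:ℝ), HasDerivAt (x i) (x' i t) t)
    (hode : ∀ i, ∀ t > (0:ℝ),
      x' i t = ∑ j ∈ Finset.univ.erase i,
        (ψ ‖x i (t - σ) - x j (t - τ)‖ / (N - 1)) • (x j (t - τ) - x i (t - σ))) :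
    ∀ᵐ t ∂(volume : Measure ℝ), t ∈ Set.Ioi (2 * τ) →
      ∃ D : ℝ, HasDerivAt (hkDiam x) D t ∧
        D ≤ 4 * (∫ s in (t - τ)..t, hkDiam x (s - τ))
          + 4 * τ * (∫ r in (t - 2 * τ)..t, hkMaxDer x' r)
          - N * hkAMin ψ σ τ x t * hkDiam x t := by
  have : NeZero N := ⟨by omega⟩
  have hx : IsHKSolution σ τ ψ x x' := ⟨hxc, hder, hode⟩
  filter_upwards [hx.ae_differentiableAt_hkDiam hστ hψcont] with t hdiff (ht : 2 * τ < t)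
  have ht0 : 0 < t := by linarith [hσ.trans hστ]
  have hD := (hdiff ht0).hasDerivAt
  refine ⟨_, hD, ?_⟩
  have hcontract := hx.hasDerivAt_hkDiam_le hσ hστ hψpos hψbdd ht0 hD fun k s hs =>
    hx.norm_sub_le_integral_hkMaxDer hστ hψcont k (by linarith [hσ.trans hστ]) hs.1 hs.2 le_rfl
  have hwindow := hx.integral_hkMaxDer_le hσ hστ hψpos hψcont hψbdd ht
  linarith

theorem stmt_4
    (N d : ℕ) (hN : 2 ≤ N) (hd : 1 ≤ d)
    (σ τ : ℝ) (hσ : 0 ≤ σ) (hστ : σ ≤ τ) (hτ : 0 < τ)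
    (ψ : ℝ → ℝ)
    (hψpos : ∀ s, 0 ≤ s → 0 < ψ s)
    (hψcont : ContinuousOn ψ (Set.Ici 0))
    (hψmono : ∀ s t, 0 ≤ s → s ≤ t → ψ t ≤ ψ s)
    (hψbdd : ∀ s, 0 ≤ s → ψ s ≤ 1)
    (x x' : Fin N → ℝ → EuclideanSpace ℝ (Fin d))
    (hxc : ∀ i, ContinuousOn (x i) (Set.Ici (-τ)))
    (hder : ∀ i, ∀ t > (0:ℝ), HasDerivAt (x i) (x' i t) t)
    (hode : ∀ i, ∀ t > (0:ℝ),
      x' i t = ∑ j ∈ Finset.univ.erase i,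
        (ψ ‖x i (t - σ) - x j (t - τ)‖ / (N - 1)) • (x j (t - τ) - x i (t - σ))) :
    ∀ᵐ t ∂(volume : Measure ℝ), t ∈ Set.Ioi (2 * τ) →
      ∃ D : ℝ, HasDerivAt (hkDiam x) D t ∧
        D ≤ 4 * (∫ s in (t - τ)..t, hkDiam x (s - τ))
          + 4 * τ * (∫ r in (t - 2 * τ)..t, hkMaxDer x' r)
          - N * hkAMin ψ σ τ x t * hkDiam x t :=
  stmt_4_general N d hN σ τ hσ hστ ψ hψpos hψcont hψbdd x x' hxc hder hode
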